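/- Let m ≠ 0 be a real constant and let g₃ be the metric on ℝ³ with coordinates (τ,x,y) whose components are g₃ = diag(−e^{mτ}, e^{mτ}, 1). Then the vector field Y₁₀ with components Y₁₀ = (m y, 0, m²y²/4 + e^{mτ}) is a conformal Killing vector of g₃ with conformal factor ψ(τ,x,y) = m²y/2. -/

import Mathlib

open Real

/-- Partial derivative of a scalar function on `ℝⁿ` with respect to the `c`-th coordinate. -/
noncomputable def pd {n : ℕ} (f : (Fin n → ℝ) → ℝ) (c : Fin n) (p : Fin n → ℝ) : ℝ :=
  fderiv ℝ f p (Pi.single c 1)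

/-- `X` is a conformal Killing vector of the metric `g` with conformal factor `ψ`:
for all indices `a b` and all points `p`,
`Σ_c [X^c ∂_c g_{ab} + g_{cb} ∂_a X^c + g_{ac} ∂_b X^c] = 2 ψ g_{ab}`. -/
def IsCKV {n : ℕ} (g : (Fin n → ℝ) → Matrix (Fin n) (Fin n) ℝ)
    (X : (Fin n → ℝ) → (Fin n → ℝ)) (ψ : (Fin n → ℝ) → ℝ) : Prop :=
  ∀ (a b : Fin n) (p : Fin n → ℝ),
    (∑ c, (X p c * pd (fun q => g q a b) c p
      + g p c b * pd (fun q => X q c) a p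
      + g p a c * pd (fun q => X q c) b p)) = 2 * ψ p * g p a b


lemma hfd_exp (m : ℝ) (p : Fin 3 → ℝ) :
    HasFDerivAt (fun q : Fin 3 → ℝ => Real.exp (m * q 0))
      ((Real.exp (m * p 0) * m) • (ContinuousLinearMap.proj 0 : (Fin 3 → ℝ) →L[ℝ] ℝ)) p := by
  have h0 : HasFDerivAt (fun q : Fin 3 → ℝ => q 0)
      (ContinuousLinearMap.proj 0 : (Fin 3 → ℝ) →L[ℝ] ℝ) p :=
    (ContinuousLinearMap.proj 0 : (Fin 3 → ℝ) →L[ℝ] ℝ).hasFDerivAt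
  have h1 := h0.const_mul m
  have h2 := (Real.hasDerivAt_exp (m * p 0)).comp_hasFDerivAt p h1
  simpa [smul_smul, mul_comm, Function.comp_def] using h2

lemma pd_exp (m : ℝ) (c : Fin 3) (p : Fin 3 → ℝ) :
    pd (fun q => Real.exp (m * q 0)) c p = Real.exp (m * p 0) * m * (Pi.single c 1 : Fin 3 → ℝ) 0 := by
  rw [pd, (hfd_exp m p).fderiv]; simp

lemma pd_neg_exp (m : ℝ) (c : Fin 3) (p : Fin 3 → ℝ) :
    pd (fun q => -Real.exp (m * q 0)) c p = -(Real.exp (m * p 0) * m * (Pi.single c 1 : Fin 3 → ℝ) 0) := by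
  rw [pd, (hfd_exp m p).fun_neg.fderiv]; simp

lemma pd_const (k : ℝ) (c : Fin 3) (p : Fin 3 → ℝ) :
    pd (fun _ => k) c p = 0 := by
  rw [pd, fderiv_fun_const]; simp

lemma pd_mcoord (m : ℝ) (c : Fin 3) (p : Fin 3 → ℝ) :
    pd (fun q => m * q 2) c p = m * (Pi.single c 1 : Fin 3 → ℝ) 2 := by
  have h0 : HasFDerivAt (fun q : Fin 3 → ℝ => q 2)
      (ContinuousLinearMap.proj 2 : (Fin 3 → ℝ) →L[ℝ] ℝ) p :=
    (ContinuousLinearMap.proj 2 : (Fin 3 → ℝ) →L[ℝ] ℝ).hasFDerivAt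
  rw [pd, (h0.const_mul m).fderiv]; simp

lemma pd_X2 (m : ℝ) (c : Fin 3) (p : Fin 3 → ℝ) :
    pd (fun q => m ^ 2 * q 2 ^ 2 / 4 + Real.exp (m * q 0)) c p
      = m ^ 2 * p 2 / 2 * (Pi.single c 1 : Fin 3 → ℝ) 2 + Real.exp (m * p 0) * m * (Pi.single c 1 : Fin 3 → ℝ) 0 := by
  have h0 : HasFDerivAt (fun q : Fin 3 → ℝ => q 2)
      (ContinuousLinearMap.proj 2 : (Fin 3 → ℝ) →L[ℝ] ℝ) p :=
    (ContinuousLinearMap.proj 2 : (Fin 3 → ℝ) →L[ℝ] ℝ).hasFDerivAt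
  have h1 : HasFDerivAt (fun q : Fin 3 → ℝ => m ^ 2 * q 2 ^ 2 / 4)
      ((m ^ 2 * p 2 / 2) • (ContinuousLinearMap.proj 2 : (Fin 3 → ℝ) →L[ℝ] ℝ)) p := by
    have h2 := (h0.fun_mul h0).const_mul (m ^ 2 / 4)
    have : (fun q : Fin 3 → ℝ => m ^ 2 / 4 * (q 2 * q 2))
        = fun q : Fin 3 → ℝ => m ^ 2 * q 2 ^ 2 / 4 := by ext q; ring
    rw [this] at h2
    refine h2.congr_fderiv ?_
    ext v
    simp
    ring
  rw [pd, (h1.fun_add (hfd_exp m p)).fderiv]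
  simp

lemma pd_X2' (m : ℝ) (c : Fin 3) (p : Fin 3 → ℝ) :
    pd (fun q => m ^ 2 * q 2 ^ 2 * (1/4) + Real.exp (m * q 0)) c p
      = m ^ 2 * p 2 / 2 * (Pi.single c 1 : Fin 3 → ℝ) 2 + Real.exp (m * p 0) * m * (Pi.single c 1 : Fin 3 → ℝ) 0 := by
  have : (fun q : Fin 3 → ℝ => m ^ 2 * q 2 ^ 2 * (1/4) + Real.exp (m * q 0))
      = fun q : Fin 3 → ℝ => m ^ 2 * q 2 ^ 2 / 4 + Real.exp (m * q 0) := by ext q; ring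
  rw [this, pd_X2]

/-- `Y₁₀ = (my, 0, m²y²/4 + e^{mτ})` is a CKV of
`g₃ = diag(−e^{mτ}, e^{mτ}, 1)` with conformal factor `ψ = m²y/2`. -/
theorem Y10_is_CKV (m : ℝ) (hm : m ≠ 0) :
    IsCKV
      (fun p : Fin 3 → ℝ =>
        Matrix.diagonal ![-Real.exp (m * p 0), Real.exp (m * p 0), 1])
      (fun p : Fin 3 → ℝ =>
        ![m * p 2, 0, m ^ 2 * p 2 ^ 2 / 4 + Real.exp (m * p 0)])
      (fun p => m ^ 2 * p 2 / 2) := by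
  intro a b p
  fin_cases a <;> fin_cases b <;>
    simp [Fin.sum_univ_three, Matrix.diagonal, pd_exp, pd_neg_exp, pd_const, pd_mcoord, pd_X2, pd_X2',
      Pi.single_apply] <;> ring
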